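/- arXiv:2601.22908 — 3 statements merged into one kernel-verified Lean document; each statement's English description precedes it below -/
import Mathlib

section
/- (Algebraic core of Theorem 3.1, redu_radical.) Let A and B be abelian groups. Assume that every additive endomorphism of B that factors through A is radical. If f is a bijective additive endomorphism of A × B whose block component f_AA is an automorphism of A, then the block component f_BB is an automorphism of B. -/
/-!
Write `f = [[a, b], [c, d]]` in block form with `a` invertible. Since `f` is bijective, so is
its Schur complement `s = d - c a⁻¹ b`: the inverse sends `y` to the `B`-component of
`f⁻¹ (0, y)`. Then `d = s + c a⁻¹ b = s ∘ (id + s⁻¹ ∘ (c a⁻¹ b))`, and `c a⁻¹ b` factors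
through `A`, so it is radical and the second factor is bijective.
-/

/-- The block components of an additive endomorphism of `A × B`. -/
def blockAA {A B : Type*} [AddCommGroup A] [AddCommGroup B] (f : A × B →+ A × B) : A →+ A :=
  (AddMonoidHom.fst A B).comp (f.comp (AddMonoidHom.inl A B))

def blockBB {A B : Type*} [AddCommGroup A] [AddCommGroup B] (f : A × B →+ A × B) : B →+ B :=
  (AddMonoidHom.snd A B).comp (f.comp (AddMonoidHom.inr A B))

/-- An endomorphism `e` of `B` is radical if `id + ψ ∘ e ∘ ϕ` is bijective
for all endomorphisms `ψ, ϕ` of `B`. -/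
def IsRadicalEnd {B : Type*} [AddCommGroup B] (e : B →+ B) : Prop :=
  ∀ ψ φ : B →+ B, Function.Bijective (AddMonoidHom.id B + ψ.comp (e.comp φ))

theorem IsRadicalEnd.bijective_add {B : Type*} [AddCommGroup B] {s e : B →+ B}
    (hs : Function.Bijective s) (he : IsRadicalEnd e) : Function.Bijective (s + e) := by
  let σ := AddEquiv.ofBijective s hs
  have hfactor : ⇑(s + e) =
      ⇑s ∘ ⇑(AddMonoidHom.id B + (σ.symm : B →+ B).comp (e.comp (AddMonoidHom.id B))) := by
    funext y
    have hσ : s (σ.symm (e y)) = e y := σ.apply_symm_apply (e y)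
    simp [hσ]
  rw [hfactor]
  exact hs.comp (he _ _)

section Blocks

variable {A B : Type*} [AddCommGroup A] [AddCommGroup B] (f : A × B →+ A × B)

def blockAB : B →+ A :=
  (AddMonoidHom.fst A B).comp (f.comp (AddMonoidHom.inr A B))

def blockBA : A →+ B :=
  (AddMonoidHom.snd A B).comp (f.comp (AddMonoidHom.inl A B))

theorem apply_eq_blocks (x : A) (y : B) :
    f (x, y) = (blockAA f x + blockAB f y, blockBA f x + blockBB f y) := by
  have hsplit : ((x, y) : A × B) = (x, 0) + (0, y) := by simp
  rw [hsplit, map_add]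
  rfl

def schurComplement (aInv : A →+ A) : B →+ B :=
  blockBB f - (blockBA f).comp (aInv.comp (blockAB f))

theorem bijective_schurComplement (hf : Function.Bijective f) (aInv : A →+ A)
    (hl : Function.LeftInverse aInv (blockAA f)) (hr : Function.RightInverse aInv (blockAA f)) :
    Function.Bijective (schurComplement f aInv) := by
  constructor
  · rw [injective_iff_map_eq_zero]
    intro y hy
    have hker : f (-aInv (blockAB f y), y) = f 0 := by
      rw [apply_eq_blocks, map_neg, map_neg, hr]
      rw [schurComplement, AddMonoidHom.sub_apply, sub_eq_zero] at hy
      simp [hy]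
    exact congrArg Prod.snd (hf.1 hker)
  · intro z
    obtain ⟨⟨x, y⟩, hxy⟩ := hf.2 (0, z)
    rw [apply_eq_blocks, Prod.mk.injEq] at hxy
    obtain ⟨hfst, hsnd⟩ := hxy
    have hx : aInv (blockAB f y) = -x := by
      rw [eq_neg_of_add_eq_zero_right hfst, ← map_neg, hl]
    refine ⟨y, ?_⟩
    simp [schurComplement, hx, ← hsnd, add_comm]

end Blocks

/-- Algebraic core of Theorem 3.1 (`redu_radical`): if every additive endomorphism of `B`
factoring through `A` is radical, and `f` is a bijective additive endomorphism of `A × B`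
whose block `f_AA` is an automorphism of `A`, then `f_BB` is an automorphism of `B`. -/
theorem blockBB_bijective_of_radical {A B : Type*} [AddCommGroup A] [AddCommGroup B]
    (hrad : ∀ e : B →+ B, (∃ (u : B →+ A) (v : A →+ B), e = v.comp u) → IsRadicalEnd e)
    (f : A × B →+ A × B) (hf : Function.Bijective f)
    (hAA : Function.Bijective (blockAA f)) :
    Function.Bijective (blockBB f) := by
  let α := AddEquiv.ofBijective (blockAA f) hAA
  let e := (blockBA f).comp ((α.symm : A →+ A).comp (blockAB f))
  have hschur : Function.Bijective (schurComplement f α.symm) :=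
    bijective_schurComplement f hf α.symm α.symm_apply_apply α.apply_symm_apply
  have he : IsRadicalEnd e := hrad e ⟨_, _, rfl⟩
  have hd : blockBB f = schurComplement f α.symm + e := (sub_add_cancel _ _).symm
  rw [hd]
  exact IsRadicalEnd.bijective_add hschur he
end

section
/- (Algebraic core of Lemma 2.8(i), red(i).) Let A and B be abelian groups such that at least one of the groups Hom(A,B) and Hom(B,A) is trivial, i.e. either every additive homomorphism A → B is zero, or every additive homomorphism B → A is zero. Then for every bijective additive endomorphism f of A × B, the block component f_AA is an automorphism of A and the block component f_BB is an automorphism of B. -/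
/-- Algebraic core of Lemma 2.8(i) (`red(i)`): if either `Hom(A,B) = 0` or `Hom(B,A) = 0`,
then for every bijective additive endomorphism `f` of `A × B`, the diagonal blocks
`f_AA` and `f_BB` are automorphisms of `A` and `B` respectively. -/
theorem blocks_bijective_of_hom_trivial {A B : Type*} [AddCommGroup A] [AddCommGroup B]
    (h : (∀ u : A →+ B, u = 0) ∨ (∀ v : B →+ A, v = 0))
    (f : A × B →+ A × B) (hf : Function.Bijective f) :
    Function.Bijective (blockAA f) ∧ Function.Bijective (blockBB f) := by
  set e := AddEquiv.ofBijective f hf with he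
  set g := e.symm.toAddMonoidHom with hg
  have hgf : ∀ x, g (f x) = x := fun x => e.symm_apply_apply x
  have hfg : ∀ x, f (g x) = x := fun x => e.apply_symm_apply x
  rcases h with h | h
  · -- Hom(A,B) = 0 : second components of f (a,0) and g (a,0) vanish
    have hf2 : ∀ a : A, (f (a, 0)).2 = 0 := fun a => by
      simpa using DFunLike.congr_fun
        (h ((AddMonoidHom.snd A B).comp (f.comp (AddMonoidHom.inl A B)))) a
    have hg2 : ∀ a : A, (g (a, 0)).2 = 0 := fun a => by
      simpa using DFunLike.congr_fun
        (h ((AddMonoidHom.snd A B).comp (g.comp (AddMonoidHom.inl A B)))) a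
    have hAA : ∀ (p q : A × B →+ A × B), (∀ x, q (p x) = x) → (∀ a : A, (p (a,0)).2 = 0) →
        ∀ a, blockAA q (blockAA p a) = a := by
      intro p q hqp hp2 a
      show (q ((p (a, 0)).1, 0)).1 = a
      rw [show (((p (a, 0)).1 : A), (0 : B)) = p (a, 0) from Prod.ext rfl (hp2 a).symm, hqp]
    have hBB : ∀ (p q : A × B →+ A × B), (∀ x, q (p x) = x) → (∀ a : A, (q (a,0)).2 = 0) →
        ∀ b, blockBB q (blockBB p b) = b := by
      intro p q hqp hq2 b
      show (q (0, (p (0, b)).2)).2 = b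
      have hsum : q (p (0, b)) = q ((p (0, b)).1, 0) + q (0, (p (0, b)).2) := by
        rw [← map_add, Prod.mk_add_mk, add_zero, zero_add]
      have := congrArg Prod.snd hsum
      rw [hqp] at this
      simpa [hq2] using this.symm
    constructor
    · exact Function.bijective_iff_has_inverse.mpr
        ⟨blockAA g, hAA f g hgf hf2, hAA g f hfg hg2⟩
    · exact Function.bijective_iff_has_inverse.mpr
        ⟨blockBB g, hBB f g hgf hg2, hBB g f hfg hf2⟩
  · -- Hom(B,A) = 0 : first components of f (0,b) and g (0,b) vanish
    have hf1 : ∀ b : B, (f (0, b)).1 = 0 := fun b => by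
      simpa using DFunLike.congr_fun
        (h ((AddMonoidHom.fst A B).comp (f.comp (AddMonoidHom.inr A B)))) b
    have hg1 : ∀ b : B, (g (0, b)).1 = 0 := fun b => by
      simpa using DFunLike.congr_fun
        (h ((AddMonoidHom.fst A B).comp (g.comp (AddMonoidHom.inr A B)))) b
    have hBB : ∀ (p q : A × B →+ A × B), (∀ x, q (p x) = x) → (∀ b : B, (p (0,b)).1 = 0) →
        ∀ b, blockBB q (blockBB p b) = b := by
      intro p q hqp hp1 b
      show (q (0, (p (0, b)).2)).2 = b
      rw [show ((0 : A), ((p (0, b)).2 : B)) = p (0, b) from Prod.ext (hp1 b).symm rfl, hqp]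
    have hAA : ∀ (p q : A × B →+ A × B), (∀ x, q (p x) = x) → (∀ b : B, (q (0,b)).1 = 0) →
        ∀ a, blockAA q (blockAA p a) = a := by
      intro p q hqp hq1 a
      show (q ((p (a, 0)).1, 0)).1 = a
      have hsum : q (p (a, 0)) = q ((p (a, 0)).1, 0) + q (0, (p (a, 0)).2) := by
        rw [← map_add, Prod.mk_add_mk, add_zero, zero_add]
      have := congrArg Prod.fst hsum
      rw [hqp] at this
      simpa [hq1] using this.symm
    constructor
    · exact Function.bijective_iff_has_inverse.mpr
        ⟨blockAA g, hAA f g hgf hg1, hAA g f hfg hf1⟩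
    · exact Function.bijective_iff_has_inverse.mpr
        ⟨blockBB g, hBB f g hgf hf1, hBB g f hfg hg1⟩
end

section
/- (Ring-theoretic core of Proposition 4.9, wed.) Let n ≥ 1 and let R = ℤ[α,β]/(αβ, α^{n+1}, β^{n+1}), realized as the quotient of the polynomial ring MvPolynomial (Fin 2) ℤ by the ideal generated by X₀·X₁, X₀^{n+1} and X₁^{n+1}, with α, β the classes of X₀, X₁. Let f : R → R be a ring homomorphism such that f(α) = a·α + b·β and f(β) = c·α + d·β for integers a, b, c, d with ad − bc = 1 or ad − bc = −1. Then f is bijective, i.e. a ring automorphism of R. -/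
open MvPolynomial

/-- The ideal `(αβ, α^{n+1}, β^{n+1})` in `ℤ[α,β] = MvPolynomial (Fin 2) ℤ`. -/
noncomputable def wedgeIdeal (n : ℕ) : Ideal (MvPolynomial (Fin 2) ℤ) :=
  Ideal.span {X 0 * X 1, X 0 ^ (n + 1), X 1 ^ (n + 1)}

/-- The ring `R = ℤ[α,β]/(αβ, α^{n+1}, β^{n+1})`, the integral cohomology ring of
`ℂPⁿ ∨ ℂPⁿ`. -/
noncomputable abbrev WedgeRing (n : ℕ) : Type :=
  MvPolynomial (Fin 2) ℤ ⧸ wedgeIdeal n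

/-- The class `α` of `X₀` in `R`. -/
noncomputable def wedgeAlpha (n : ℕ) : WedgeRing n :=
  Ideal.Quotient.mk (wedgeIdeal n) (X 0)

/-- The class `β` of `X₁` in `R`. -/
noncomputable def wedgeBeta (n : ℕ) : WedgeRing n :=
  Ideal.Quotient.mk (wedgeIdeal n) (X 1)

/-- Iterates of a ring endomorphism. -/
private def ringHomIter {R : Type*} [Semiring R] (f : R →+* R) : ℕ → (R →+* R)
  | 0 => RingHom.id R
  | k + 1 => f.comp (ringHomIter f k)

private theorem ringHomIter_surjective {R : Type*} [Semiring R] (f : R →+* R)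
    (hf : Function.Surjective f) : ∀ k, Function.Surjective (ringHomIter f k)
  | 0 => Function.surjective_id
  | k + 1 => hf.comp (ringHomIter_surjective f hf k)

/-- A surjective ring endomorphism of a Noetherian (commutative) ring is injective. -/
private theorem injective_of_surjective_ringEnd {R : Type*} [CommRing R] [IsNoetherianRing R]
    (f : R →+* R) (hf : Function.Surjective f) : Function.Injective f := by
  rw [RingHom.injective_iff_ker_eq_bot, eq_bot_iff]
  have hmono : Monotone fun k => RingHom.ker (ringHomIter f k) := by
    apply monotone_nat_of_le_succ
    intro k x hx
    simp only [RingHom.mem_ker] at hx ⊢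
    show f.comp (ringHomIter f k) x = 0
    simp [RingHom.comp_apply, hx]
  obtain ⟨m, hm⟩ := (monotone_stabilizes_iff_noetherian.mpr ‹_›)
    (⟨fun k => RingHom.ker (ringHomIter f k), hmono⟩ : ℕ →o Ideal R)
  intro x hx
  rw [RingHom.mem_ker] at hx
  obtain ⟨y, hy⟩ := ringHomIter_surjective f hf m x
  have hy1 : ringHomIter f (m + 1) y = 0 := by
    show f.comp (ringHomIter f m) y = 0
    simp [RingHom.comp_apply, hy, hx]
  have : y ∈ RingHom.ker (ringHomIter f m) := by
    have := hm (m + 1) (Nat.le_succ m)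
    simp only [OrderHom.coe_mk] at this
    rw [this, RingHom.mem_ker]
    exact hy1
  rw [RingHom.mem_ker] at this
  simp [← hy, this]

/-- Ring-theoretic core of Proposition 4.9 (`wed`): a ring endomorphism of
`R = ℤ[α,β]/(αβ, α^{n+1}, β^{n+1})` with `f(α) = aα + bβ`, `f(β) = cα + dβ` and
`ad - bc = ±1` is a ring automorphism of `R`. -/
theorem wedgeRing_hom_bijective (n : ℕ) (hn : 1 ≤ n)
    (f : WedgeRing n →+* WedgeRing n) (a b c d : ℤ)
    (hα : f (wedgeAlpha n) = a • wedgeAlpha n + b • wedgeBeta n)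
    (hβ : f (wedgeBeta n) = c • wedgeAlpha n + d • wedgeBeta n)
    (hdet : a * d - b * c = 1 ∨ a * d - b * c = -1) :
    Function.Bijective f := by
  have hε : (a * d - b * c) * (a * d - b * c) = 1 := by
    rcases hdet with h | h <;> rw [h] <;> ring
  -- α and β lie in the range of f
  have hαmem : wedgeAlpha n ∈ f.range := by
    refine ⟨(a * d - b * c) • (d • wedgeAlpha n - b • wedgeBeta n), ?_⟩
    rw [map_zsmul, map_sub, map_zsmul, map_zsmul, hα, hβ]
    match_scalars
    · linear_combination hε
    · ring
  have hβmem : wedgeBeta n ∈ f.range := by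
    refine ⟨(a * d - b * c) • (a • wedgeBeta n - c • wedgeAlpha n), ?_⟩
    rw [map_zsmul, map_sub, map_zsmul, map_zsmul, hα, hβ]
    match_scalars
    · ring
    · linear_combination hε
  have hsurj : Function.Surjective f := by
    intro x
    obtain ⟨p, rfl⟩ := Ideal.Quotient.mk_surjective x
    show Ideal.Quotient.mk (wedgeIdeal n) p ∈ f.range
    induction p using MvPolynomial.induction_on with
    | C r =>
        have : (C r : MvPolynomial (Fin 2) ℤ) = (r : MvPolynomial (Fin 2) ℤ) := by
          simp
        rw [this, map_intCast]
        exact intCast_mem f.range r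
    | add p q hp hq =>
        rw [map_add]; exact add_mem hp hq
    | mul_X p i hp =>
        rw [map_mul]
        refine mul_mem hp ?_
        fin_cases i
        · exact hαmem
        · exact hβmem
  exact ⟨injective_of_surjective_ringEnd f hsurj, hsurj⟩
end
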